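/- Let $G$ be a finite group and let $m$ be a positive integer such that every abelian subgroup of $G$ has order at most $m$. Define $g(m)$ to be the product of all prime powers that are at most $m$ (each prime power $p^j \leq m$ with $j \geq 1$ contributing one factor $p^j$). Then $|G|$ divides $g(m)$. -/

import Mathlib

/-- `g m` is the product of all prime powers at most `m`. -/
def primePowerProduct (m : ℕ) : ℕ :=
  ∏ n ∈ (Finset.range (m + 1)).filter IsPrimePow, n

/-!
It suffices to bound every `p`-subgroup `P` of `G`. A maximal normal abelian subgroup `A` of `P`,
of order `p ^ a ≤ m`, is self-centralizing. Refine `A` into a chain `1 = A₀ < ⋯ < Aₐ = A` of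
normal subgroups of `P` with `Aᵢ₊₁ = Aᵢ ⟨tᵢ⟩` and `⁅P, Aᵢ₊₁⁆ ≤ Aᵢ`. Then `g ↦ ⁅g, tᵢ⁆` embeds
`C(Aᵢ) / C(Aᵢ₊₁)` into `Aᵢ`, so `[P : A] = [P : C(A)]` divides `p ^ (0 + 1 + ⋯ + (a - 1))` and
`|P|` divides `p ^ 1 * p ^ 2 * ⋯ * p ^ a`, which divides `g(m)` because `a ≤ log_p m`.
-/

open Subgroup
open scoped commutatorElement

namespace Subgroup

variable {G : Type*} [Group G]

theorem isMulCommutative_of_le {A B : Subgroup G} [IsMulCommutative A] (hBA : B ≤ A) :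
    IsMulCommutative B :=
  le_centralizer_iff_isMulCommutative.mp <|
    hBA.trans ((le_centralizer A).trans (centralizer_le hBA))

theorem sup_zpowers_eq_of_relIndex_prime {A B : Subgroup G} (hBA : B ≤ A)
    (hp : (B.relIndex A).Prime) {t : G} (htA : t ∈ A) (htB : t ∉ B) : B ⊔ zpowers t = A := by
  have hDA : B ⊔ zpowers t ≤ A := sup_le hBA (zpowers_le.mpr htA)
  rw [← relIndex_mul_relIndex B _ A le_sup_left hDA] at hp
  rcases Nat.prime_mul_iff.mp hp with ⟨-, h⟩ | ⟨-, h⟩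
  · exact le_antisymm hDA (relIndex_eq_one.mp h)
  · exact absurd (relIndex_eq_one.mp h (mem_sup_right (mem_zpowers t))) htB

/-- `g ↦ ⁅g, t⁆` is a homomorphism on `C(B)`, since its values lie in the abelian group `A` and
commute with `C(B)`; its kernel is `C(A)` and its image lies in `B`. -/
theorem relIndex_centralizer_dvd_card {A B : Subgroup G} [IsMulCommutative A] {t : G}
    (hA : B ⊔ zpowers t = A) (ht : ∀ g : G, ⁅g, t⁆ ∈ B) :
    (centralizer (A : Set G)).relIndex (centralizer (B : Set G)) ∣ Nat.card B := by
  have hBA : B ≤ A := hA ▸ le_sup_left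
  let φ : centralizer (B : Set G) →* G := MonoidHom.mk' (fun g => ⁅(g : G), t⁆) fun g h => by
    have hg : (g : G) * ⁅(h : G), t⁆ = ⁅(h : G), t⁆ * g :=
      (mem_centralizer_iff.mp g.2 _ (ht h)).symm
    calc ⁅(g : G) * h, t⁆ = (g : G) * ⁅(h : G), t⁆ * (g : G)⁻¹ * ⁅(g : G), t⁆ := by
          simp only [commutatorElement_def]; group
      _ = ⁅(h : G), t⁆ * ⁅(g : G), t⁆ := by rw [hg]; group
      _ = ⁅(g : G), t⁆ * ⁅(h : G), t⁆ := setLike_mul_comm (hBA (ht h)) (hBA (ht g))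
  have hker : (centralizer (A : Set G)).subgroupOf (centralizer (B : Set G)) = φ.ker := by
    ext g
    have hφ : φ g = 1 ↔ (g : G) ∈ centralizer {t} := by
      simp [φ, mem_centralizer_iff_commutator_eq_one']
    rw [mem_subgroupOf, MonoidHom.mem_ker, hφ]
    refine ⟨fun hg => centralizer_le
      (Set.singleton_subset_iff.mpr (hA ▸ mem_sup_right (mem_zpowers t))) hg,
      fun hgt => ?_⟩
    have hAg : A ≤ centralizer {(g : G)} :=
      hA ▸ sup_le (fun b hb => mem_centralizer_singleton_iff.mpr (g.2 b hb))
        (zpowers_le.mpr (mem_centralizer_singleton_iff.mpr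
          (mem_centralizer_singleton_iff.mp hgt).symm))
    exact fun a ha => mem_centralizer_singleton_iff.mp (hAg ha)
  rw [relIndex, hker, index_ker]
  exact card_dvd_of_le (by rintro _ ⟨g, rfl⟩; exact ht g)

end Subgroup

theorem Group.IsNilpotent.eq_bot_of_le_commutator_top {G : Type*} [Group G]
    [Group.IsNilpotent G] {H : Subgroup G} (hH : H ≤ ⁅H, ⊤⁆) : H = ⊥ := by
  obtain ⟨n, hn⟩ := Subgroup.nilpotent_iff_lowerCentralSeries.mp ‹Group.IsNilpotent G›
  have hle : ∀ k, H ≤ (⊤ : Subgroup G).lowerCentralSeries k := fun k =>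
    Nat.rec le_top (fun _ ih => hH.trans (commutator_mono ih le_rfl)) k
  exact le_bot_iff.mp (hn ▸ hle n)

namespace IsPGroup

variable {p : ℕ} [Fact p.Prime] {P : Type*} [Group P] [Finite P]

theorem commutator_top_lt (hP : IsPGroup p P) {A : Subgroup P} [A.Normal] (hA : A ≠ ⊥) :
    ⁅(⊤ : Subgroup P), A⁆ < A := by
  have := hP.isNilpotent
  refine lt_of_le_of_ne (commutator_le_right ⊤ A) fun h => hA ?_
  exact Group.IsNilpotent.eq_bot_of_le_commutator_top (commutator_comm A ⊤ ▸ h.ge)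

theorem exists_ne_one_mem_center_of_normal (hP : IsPGroup p P) {N : Subgroup P} [N.Normal]
    (hN : N ≠ ⊥) : ∃ x ∈ N, x ≠ 1 ∧ x ∈ center P := by
  have hpN : p ∣ Nat.card N :=
    ((hP.to_subgroup N).card_eq_or_dvd).resolve_left (card_eq_one.not.mpr hN)
  have hone : (1 : N) ∈ MulAction.fixedPoints (ConjAct P) N := fun g => smul_one g
  obtain ⟨x, hx, hx1⟩ := (hP.of_equiv ConjAct.toConjAct)
    |>.exists_fixed_point_of_prime_dvd_card_of_fixed_point N hpN hone
  refine ⟨x, x.2, fun h => hx1 (Subtype.ext h.symm), mem_center_iff.mpr fun g => ?_⟩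
  have := congrArg Subtype.val (hx (ConjAct.toConjAct g))
  rw [ConjAct.Subgroup.val_conj_smul, ConjAct.toConjAct_smul] at this
  exact mul_inv_eq_iff_eq_mul.mp this

theorem exists_commutator_le_sup_zpowers_eq (hP : IsPGroup p P) {A : Subgroup P} [A.Normal]
    {n : ℕ} (hA : Nat.card A = p ^ (n + 1)) :
    ∃ (B : Subgroup P) (t : P),
      ⁅(⊤ : Subgroup P), A⁆ ≤ B ∧ Nat.card B = p ^ n ∧ B ⊔ zpowers t = A := by
  have hp := (Fact.out : p.Prime)
  set K := ⁅(⊤ : Subgroup P), A⁆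
  have hKA : K < A := hP.commutator_top_lt fun h => by
    rw [h, card_bot] at hA
    exact (Nat.one_lt_pow n.succ_ne_zero hp.one_lt).ne hA
  obtain ⟨k, hk⟩ := IsPGroup.iff_card.mp (hP.to_subgroup K)
  have hkn : k ≤ n := by
    have hlt : Nat.card K < Nat.card A := (card_le_of_le hKA.le).lt_of_ne
      fun h => hKA.ne (eq_of_le_of_card_ge hKA.le h.ge)
    rw [hk, hA] at hlt
    exact Nat.lt_succ_iff.mp ((Nat.pow_lt_pow_iff_right hp.one_lt).mp hlt)
  have hKsub : (K.subgroupOf A).map A.subtype = K := by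
    rw [subgroupOf_map_subtype, inf_of_le_left hKA.le]
  obtain ⟨B', hB', hKB'⟩ := Sylow.exists_subgroup_card_pow_prime_le p
    (hA ▸ pow_dvd_pow p n.le_succ) (K.subgroupOf A)
    ((card_subtype A _).symm.trans (by rw [hKsub, hk])) hkn
  set B := B'.map A.subtype
  have hBA : B ≤ A := map_subtype_le B'
  have hB : Nat.card B = p ^ n := (card_subtype A B').trans hB'
  have hBA_index : B.relIndex A = p := by
    have h := relIndex_mul_relIndex ⊥ B A bot_le hBA
    rw [relIndex_bot_left, relIndex_bot_left, hB, hA, pow_succ] at h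
    exact Nat.eq_of_mul_eq_mul_left (pow_pos hp.pos n) h
  obtain ⟨t, htA, htB⟩ := SetLike.not_le_iff_exists.mp fun h =>
    hp.ne_one (hBA_index ▸ relIndex_eq_one.mpr h)
  exact ⟨B, t, hKsub ▸ map_mono hKB', hB,
    sup_zpowers_eq_of_relIndex_prime hBA (hBA_index ▸ hp) htA htB⟩

theorem exists_normal_isMulCommutative_gt (hP : IsPGroup p P) {A : Subgroup P} [A.Normal]
    [IsMulCommutative A] (hA : ¬centralizer (A : Set P) ≤ A) :
    ∃ B : Subgroup P, (B.Normal ∧ IsMulCommutative B) ∧ A < B := by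
  let π := QuotientGroup.mk' A
  have hN : (centralizer (A : Set P)).map π ≠ ⊥ := by
    obtain ⟨x, hxC, hxA⟩ := SetLike.not_le_iff_exists.mp hA
    intro h
    have hx := mem_map_of_mem π hxC
    rw [h, mem_bot] at hx
    exact hxA ((QuotientGroup.eq_one_iff x).mp hx)
  have : ((centralizer (A : Set P)).map π).Normal :=
    Normal.map inferInstance π (QuotientGroup.mk'_surjective A)
  obtain ⟨_, ⟨c, hcA, rfl⟩, hc1, hcZ⟩ :=
    (hP.to_quotient A).exists_ne_one_mem_center_of_normal hN
  have hZ : (zpowers (π c)).Normal := ⟨fun z hz g => by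
    rwa [mem_center_iff.mp (zpowers_le.mpr hcZ hz) g, mul_inv_cancel_right]⟩
  have hcomm : IsMulCommutative (closure (insert c (A : Set P))) := by
    refine isMulCommutative_closure ?_
    rintro x (rfl | hx) y (rfl | hy)
    exacts [rfl, (hcA y hy).symm, hcA x hx, setLike_mul_comm hx hy]
  refine ⟨(zpowers (π c)).comap π,
    ⟨hZ.comap π, isMulCommutative_of_le (A := closure (insert c A)) fun y hy => ?_⟩,
    lt_of_le_of_ne (fun a ha => ?_) fun h => ?_⟩
  · obtain ⟨k, hk⟩ := mem_zpowers_iff.mp (mem_comap.mp hy)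
    have hy' : (c ^ k)⁻¹ * y ∈ A := by
      rw [← QuotientGroup.eq_one_iff]
      change π ((c ^ k)⁻¹ * y) = 1
      rw [map_mul, map_inv, map_zpow, hk, inv_mul_cancel]
    rw [← mul_inv_cancel_left (c ^ k) y]
    exact mul_mem (zpow_mem (subset_closure (Set.mem_insert c _)) k)
      (subset_closure (Set.mem_insert_of_mem c hy'))
  · simp [π, (QuotientGroup.eq_one_iff a).mpr ha]
  · refine hc1 ((QuotientGroup.eq_one_iff c).mpr ?_)
    exact h ▸ mem_comap.mpr (mem_zpowers (π c))

theorem exists_normal_isMulCommutative_centralizer_eq (hP : IsPGroup p P) :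
    ∃ A : Subgroup P, A.Normal ∧ IsMulCommutative A ∧ centralizer (A : Set P) = A := by
  obtain ⟨A, ⟨hAn, hAc⟩, hmax⟩ :=
    (Set.toFinite {A : Subgroup P | A.Normal ∧ IsMulCommutative A}).exists_maximal
      ⟨⊥, inferInstance, inferInstance⟩
  refine ⟨A, hAn, hAc, le_antisymm (not_not.mp fun hA => ?_) (le_centralizer A)⟩
  obtain ⟨B, hB, hAB⟩ := hP.exists_normal_isMulCommutative_gt hA
  exact hAB.not_ge (hmax hB hAB.le)

theorem index_centralizer_dvd_pow_choose_two (hP : IsPGroup p P) {n : ℕ} :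
    ∀ {A : Subgroup P} [A.Normal] [IsMulCommutative A], Nat.card A = p ^ n →
      (centralizer (A : Set P)).index ∣ p ^ n.choose 2 := by
  induction n with
  | zero =>
    intro A _ _ hA
    simp [card_eq_one.mp (hA.trans (pow_zero p))]
  | succ n ih =>
    intro A _ _ hA
    obtain ⟨B, t, hKB, hB, hBt⟩ := hP.exists_commutator_le_sup_zpowers_eq hA
    have hBA : B ≤ A := hBt ▸ le_sup_left
    have : B.Normal := commutator_top_left_le_iff.mp ((commutator_mono le_rfl hBA).trans hKB)
    have : IsMulCommutative B := isMulCommutative_of_le hBA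
    have hrel := relIndex_centralizer_dvd_card hBt fun g =>
      hKB (commutator_mem_commutator (mem_top g) (hBt ▸ mem_sup_right (mem_zpowers t)))
    rw [← relIndex_mul_index (centralizer_le (SetLike.coe_subset_coe.mpr hBA)),
      Nat.choose_succ_succ', Nat.choose_one_right, pow_add]
    exact mul_dvd_mul (hB ▸ hrel) (ih hB)

theorem card_dvd_pow_log_choose_two (hP : IsPGroup p P) {m : ℕ}
    (hm : ∀ A : Subgroup P, IsMulCommutative A → Nat.card A ≤ m) :
    Nat.card P ∣ p ^ (Nat.log p m + 1).choose 2 := by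
  obtain ⟨A, hAn, hAc, hCA⟩ := hP.exists_normal_isMulCommutative_centralizer_eq
  obtain ⟨a, ha⟩ := IsPGroup.iff_card.mp (hP.to_subgroup A)
  have hidx := hP.index_centralizer_dvd_pow_choose_two ha
  rw [hCA] at hidx
  have hal : a ≤ Nat.log p m := Nat.le_log_of_pow_le (Fact.out : p.Prime).one_lt (ha ▸ hm A hAc)
  calc Nat.card P = Nat.card A * A.index := (card_mul_index A).symm
    _ ∣ p ^ a * p ^ a.choose 2 := mul_dvd_mul (dvd_of_eq ha) hidx
    _ = p ^ (a + 1).choose 2 := by rw [← pow_add, Nat.choose_succ_succ', Nat.choose_one_right]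
    _ ∣ p ^ (Nat.log p m + 1).choose 2 := pow_dvd_pow p (Nat.choose_le_choose 2 (by omega))

end IsPGroup

theorem pow_choose_two_log_dvd_primePowerProduct {q : ℕ} (hq : q.Prime) (m : ℕ) :
    q ^ (Nat.log q m + 1).choose 2 ∣ primePowerProduct m := by
  set b := Nat.log q m
  have hsub : (Finset.range b).image (fun j => q ^ (j + 1)) ⊆
      (Finset.range (m + 1)).filter IsPrimePow := by
    intro n hn
    obtain ⟨j, hj, rfl⟩ := Finset.mem_image.mp hn
    refine Finset.mem_filter.mpr ⟨Finset.mem_range.mpr (Nat.lt_succ_of_le ?_),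
      (hq.prime.isPrimePow).pow j.succ_ne_zero⟩
    have hm : m ≠ 0 := fun h => by simp [b, h] at hj
    exact Nat.pow_le_of_le_log hm (Finset.mem_range.mp hj)
  calc q ^ (b + 1).choose 2 = ∏ j ∈ Finset.range b, q ^ (j + 1) := by
        rw [Finset.prod_pow_eq_pow_sum, Nat.choose_two_right, ← Finset.sum_range_id,
          Finset.sum_range_succ', add_zero]
    _ = ∏ n ∈ (Finset.range b).image (fun j => q ^ (j + 1)), n :=
        (Finset.prod_image (f := fun n => n) fun _ _ _ _ h =>
          Nat.succ_injective (Nat.pow_right_injective hq.two_le h)).symm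
    _ ∣ primePowerProduct m := Finset.prod_dvd_prod_of_subset _ _ _ hsub

theorem card_dvd_primePowerProduct_general (G : Type*) [Group G] [Finite G] (m : ℕ)
    (h : ∀ A : Subgroup G, IsMulCommutative A → Nat.card A ≤ m) :
    Nat.card G ∣ primePowerProduct m := by
  refine (Nat.dvd_iff_prime_pow_dvd_dvd _ _).mpr fun q k hq hqk => ?_
  have := Fact.mk hq
  obtain ⟨H, hH⟩ := Sylow.exists_subgroup_card_pow_prime q hqk
  have hHm : ∀ A : Subgroup H, IsMulCommutative A → Nat.card A ≤ m :=
    fun A _ => card_subtype H A ▸ h _ inferInstance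
  rw [← hH]
  exact ((IsPGroup.of_card hH).card_dvd_pow_log_choose_two hHm).trans
    (pow_choose_two_log_dvd_primePowerProduct hq m)

theorem card_dvd_primePowerProduct (G : Type*) [Group G] [Finite G] (m : ℕ) (hm : 0 < m)
    (h : ∀ A : Subgroup G, IsMulCommutative A → Nat.card A ≤ m) :
    Nat.card G ∣ primePowerProduct m :=
  card_dvd_primePowerProduct_general G m h
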